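/- arXiv:1912.07258 — 3 statements merged into one kernel-verified Lean document; each statement's English description precedes it below -/
import Mathlib

section
/- For every α ≥ 2, the integral over ℝ² of (|y|^{α−2}/(1 + |y|^α)²)·((1 − |y|^α)/(1 + |y|^α)) with respect to Lebesgue measure equals 0. -/
/-!
In polar coordinates the integral becomes a multiple of
`∫₀^∞ r ^ (α - 1) (1 - r ^ α) / (1 + r ^ α) ^ 3 dr`, and the substitution `u = r ^ α` turns this
into `|α|⁻¹ ∫₀^∞ (1 - u) / (1 + u) ^ 3 du`. The last integral vanishes because `u / (1 + u) ^ 2`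
is an antiderivative of its integrand that is `0` both at `0` and at `∞`.
-/

open MeasureTheory Real Finset

noncomputable def laplacian (f : EuclideanSpace ℝ (Fin 2) → ℝ) (x : EuclideanSpace ℝ (Fin 2)) : ℝ :=
  ∑ i : Fin 2, fderiv ℝ (fun y => fderiv ℝ f y (EuclideanSpace.single i 1)) x (EuclideanSpace.single i 1)

open Set Filter Topology

lemma hasDerivAt_div_one_add_sq {u : ℝ} (hu : 1 + u ≠ 0) :
    HasDerivAt (fun v : ℝ => v / (1 + v) ^ 2) ((1 - u) / (1 + u) ^ 3) u := by
  refine ((hasDerivAt_id' u).fun_div (((hasDerivAt_id' u).const_add 1).fun_pow 2)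
    (pow_ne_zero 2 hu)).congr_deriv ?_
  field_simp
  ring

lemma tendsto_div_one_add_sq_atTop :
    Tendsto (fun v : ℝ => v / (1 + v) ^ 2) atTop (𝓝 0) := by
  have hinv : Tendsto (fun v : ℝ => (1 + v)⁻¹) atTop (𝓝 0) :=
    tendsto_inv_atTop_zero.comp (tendsto_atTop_add_const_left _ 1 tendsto_id)
  have hdiff := hinv.sub (hinv.pow 2)
  rw [zero_pow two_ne_zero, sub_zero] at hdiff
  refine hdiff.congr' ?_
  filter_upwards [eventually_ge_atTop 0] with v hv
  have : 1 + v ≠ 0 := by linarith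
  field_simp
  ring

lemma integrableOn_Ioi_one_sub_div_one_add_pow_three :
    IntegrableOn (fun u : ℝ => (1 - u) / (1 + u) ^ 3) (Ioi 0) := by
  have h3 := integrableOn_add_rpow_Ioi_of_lt (a := -3) (m := 1) (c := 0) (by norm_num) (by norm_num)
  have h2 := integrableOn_add_rpow_Ioi_of_lt (a := -2) (m := 1) (c := 0) (by norm_num) (by norm_num)
  refine IntegrableOn.congr_fun (f := fun u : ℝ => 2 * (u + 1) ^ (-3 : ℝ) - (u + 1) ^ (-2 : ℝ))
    ((h3.const_mul 2).sub h2) (fun u (hu : 0 < u) => ?_) measurableSet_Ioi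
  have hu1 : 0 < u + 1 := by linarith
  simp only [rpow_neg hu1.le, show (3 : ℝ) = (3 : ℕ) by norm_num,
    show (2 : ℝ) = (2 : ℕ) by norm_num, rpow_natCast]
  field_simp
  ring

lemma integral_Ioi_one_sub_div_one_add_pow_three :
    ∫ u in Ioi (0 : ℝ), (1 - u) / (1 + u) ^ 3 = 0 := by
  rw [integral_Ioi_of_hasDerivAt_of_tendsto'
    (fun u (hu : 0 ≤ u) => hasDerivAt_div_one_add_sq (by linarith))
    integrableOn_Ioi_one_sub_div_one_add_pow_three tendsto_div_one_add_sq_atTop]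
  simp

lemma integral_Ioi_radial_kernel (α : ℝ) :
    ∫ r in Ioi (0 : ℝ), r * (r ^ (α - 2) / (1 + r ^ α) ^ 2 * ((1 - r ^ α) / (1 + r ^ α))) = 0 := by
  rcases eq_or_ne α 0 with rfl | hα
  · simp
  have hsubst := integral_comp_rpow_Ioi (fun u : ℝ => |α|⁻¹ * ((1 - u) / (1 + u) ^ 3)) hα
  rw [integral_const_mul, integral_Ioi_one_sub_div_one_add_pow_three, mul_zero] at hsubst
  refine (setIntegral_congr_fun measurableSet_Ioi fun r (hr : 0 < r) => ?_).trans hsubst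
  have hpow : r * r ^ (α - 2) = r ^ (α - 1) := by
    rw [show α - 1 = (α - 2) + 1 by ring, rpow_add_one hr.ne']
    ring
  have := abs_pos.2 hα
  have := rpow_nonneg hr.le α
  simp only [smul_eq_mul]
  field_simp
  rw [← hpow]
  ring

theorem singular_kernel_integral_zero_general (α : ℝ) :
    ∫ y : EuclideanSpace ℝ (Fin 2),
      (‖y‖ ^ (α - 2) / (1 + ‖y‖ ^ α) ^ 2) * ((1 - ‖y‖ ^ α) / (1 + ‖y‖ ^ α)) = 0 := by
  rw [integral_fun_norm_addHaar volume
      (fun r : ℝ => r ^ (α - 2) / (1 + r ^ α) ^ 2 * ((1 - r ^ α) / (1 + r ^ α))),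
    finrank_euclideanSpace_fin]
  simp only [Nat.add_one_sub_one, pow_one, smul_eq_mul, integral_Ioi_radial_kernel, mul_zero, smul_zero]

theorem singular_kernel_integral_zero (α : ℝ) (hα : 2 ≤ α) :
    ∫ y : EuclideanSpace ℝ (Fin 2),
      (‖y‖ ^ (α - 2) / (1 + ‖y‖ ^ α) ^ 2) * ((1 - ‖y‖ ^ α) / (1 + ‖y‖ ^ α)) = 0 :=
  singular_kernel_integral_zero_general α
end

section
/- For every α ≥ 2, the integral over ℝ² of 2α²(|y|^{α−2}/(1 + |y|^α)²)·((1 − |y|^α)/(1 + |y|^α))·log((1 + |y|^α)²) equals −4πα. -/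
open MeasureTheory Real Finset

/-!
In polar coordinates the integral is `2π ∫₀^∞ r f(r) dr`, and the substitution `u = r^α` turns it
into `8πα ∫₀^∞ (1 - u) log (1 + u) / (1 + u)³ du`. With `t = 1 + u` the integrand becomes
`2 log t / t³ - log t / t²`, and `∫₁^∞ log t / t^(s+1) dt = 1 / s²` gives the value `2/4 - 1 = -1/2`.
-/

open Set Filter Topology

theorem hasDerivAt_neg_log_div_rpow {s t : ℝ} (hs : s ≠ 0) (ht : 0 < t) :
    HasDerivAt (fun t => -(s * log t + 1) / (s ^ 2 * t ^ s)) (log t / t ^ (s + 1)) t := by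
  have hnum : HasDerivAt (fun t => -(s * log t + 1)) (-(s * t⁻¹)) t :=
    (((hasDerivAt_log ht.ne').const_mul s).add_const 1).neg
  have hden : HasDerivAt (fun t => s ^ 2 * t ^ s) (s ^ 2 * (s * t ^ (s - 1))) t :=
    (hasDerivAt_rpow_const (Or.inl ht.ne')).const_mul _
  refine (hnum.div hden (by positivity)).congr_deriv ?_
  rw [rpow_add_one ht.ne', rpow_sub_one ht.ne']
  have := rpow_pos_of_pos ht s
  field_simp
  ring

theorem tendsto_neg_log_div_rpow_atTop {s : ℝ} (hs : 0 < s) :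
    Tendsto (fun t => -(s * log t + 1) / (s ^ 2 * t ^ s)) atTop (𝓝 0) := by
  have hlog := (isLittleO_log_rpow_atTop hs).tendsto_div_nhds_zero
  have hinv := tendsto_inv_atTop_zero.comp (tendsto_rpow_atTop hs)
  convert (hlog.const_mul (-s⁻¹)).sub (hinv.const_mul (s ^ 2)⁻¹) using 1
  · ext t
    simp only [Function.comp_apply]
    field_simp
    ring
  · simp

theorem integrableOn_log_div_rpow_Ioi_one {s : ℝ} (hs : 0 < s) :
    IntegrableOn (fun t => log t / t ^ (s + 1)) (Ioi 1) :=
  integrableOn_Ioi_deriv_of_nonneg'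
    (fun _ ht => hasDerivAt_neg_log_div_rpow hs.ne' (one_pos.trans_le ht))
    (fun t ht => div_nonneg (log_nonneg (le_of_lt ht)) (rpow_nonneg (by linarith [ht.out]) _))
    (tendsto_neg_log_div_rpow_atTop hs)

theorem integral_log_div_rpow_Ioi_one {s : ℝ} (hs : 0 < s) :
    ∫ t in Ioi 1, log t / t ^ (s + 1) = 1 / s ^ 2 := by
  rw [integral_Ioi_of_hasDerivAt_of_tendsto'
    (fun _ ht => hasDerivAt_neg_log_div_rpow hs.ne' (one_pos.trans_le ht))
    (integrableOn_log_div_rpow_Ioi_one hs) (tendsto_neg_log_div_rpow_atTop hs)]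
  simp [neg_div]

theorem integral_two_sub_mul_log_div_cube_Ioi_one :
    ∫ t in Ioi 1, (2 - t) * log t / t ^ 3 = -1 / 2 := by
  have hsplit : ∀ t ∈ Ioi (1 : ℝ), (2 - t) * log t / t ^ 3 =
      2 * (log t / t ^ ((2 : ℝ) + 1)) - log t / t ^ ((1 : ℝ) + 1) := by
    intro t ht
    have ht0 : t ≠ 0 := (one_pos.trans ht).ne'
    rw [show (2 : ℝ) + 1 = (3 : ℕ) by norm_num, show (1 : ℝ) + 1 = (2 : ℕ) by norm_num,
      rpow_natCast, rpow_natCast]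
    field_simp
  rw [setIntegral_congr_fun measurableSet_Ioi hsplit,
    integral_sub ((integrableOn_log_div_rpow_Ioi_one two_pos).const_mul 2)
      (integrableOn_log_div_rpow_Ioi_one one_pos),
    integral_const_mul, integral_log_div_rpow_Ioi_one two_pos, integral_log_div_rpow_Ioi_one one_pos]
  norm_num

theorem setIntegral_Ioi_comp_add_const {E : Type*} [NormedAddCommGroup E] [NormedSpace ℝ E]
    (g : ℝ → E) (a c : ℝ) : ∫ x in Ioi a, g (x + c) = ∫ y in Ioi (a + c), g y := by
  have := (measurePreserving_add_right volume c).setIntegral_preimage_emb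
    (measurableEmbedding_addRight c) g (Ioi (a + c))
  rwa [preimage_add_const_Ioi, add_sub_cancel_right] at this

theorem integral_one_sub_mul_log_one_add_div_cube_Ioi_zero :
    ∫ u in Ioi 0, (1 - u) * log (1 + u) / (1 + u) ^ 3 = -1 / 2 := by
  have := setIntegral_Ioi_comp_add_const (fun t => (2 - t) * log t / t ^ 3) 0 1
  rw [zero_add, integral_two_sub_mul_log_div_cube_Ioi_one] at this
  rw [← this]
  congr 1 with u
  ring_nf

theorem integral_fun_norm_euclideanSpace_two (f : ℝ → ℝ) :
    ∫ y : EuclideanSpace ℝ (Fin 2), f ‖y‖ = 2 * π * ∫ r in Ioi 0, r * f r := by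
  have hball : volume.real (Metric.ball (0 : EuclideanSpace ℝ (Fin 2)) 1) = π := by
    simp [measureReal_def, EuclideanSpace.volume_ball, one_add_one_eq_two, pi_nonneg]
  rw [integral_fun_norm_addHaar, finrank_euclideanSpace_fin, hball]
  simp [mul_assoc]

theorem integral_Ioi_mul_singular_kernel {α : ℝ} (hα : 0 < α) :
    ∫ r in Ioi 0, r * (2 * α ^ 2 * (r ^ (α - 2) / (1 + r ^ α) ^ 2) *
      ((1 - r ^ α) / (1 + r ^ α)) * log ((1 + r ^ α) ^ 2)) = -(2 * α) := by
  have hsubst : ∀ r ∈ Ioi (0 : ℝ), r * (2 * α ^ 2 * (r ^ (α - 2) / (1 + r ^ α) ^ 2) *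
      ((1 - r ^ α) / (1 + r ^ α)) * log ((1 + r ^ α) ^ 2)) =
      (α * r ^ (α - 1)) • (4 * α * ((1 - r ^ α) * log (1 + r ^ α) / (1 + r ^ α) ^ 3)) := by
    intro r hr
    have hpow : r ^ (α - 1) = r ^ (α - 2) * r := by
      rw [← rpow_add_one (ne_of_gt hr)]; ring_nf
    have := rpow_pos_of_pos hr α
    rw [smul_eq_mul, hpow, log_pow]
    field_simp
    ring
  rw [setIntegral_congr_fun measurableSet_Ioi hsubst, integral_comp_rpow_Ioi_of_pos hα
      (g := fun u => 4 * α * ((1 - u) * log (1 + u) / (1 + u) ^ 3)),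
    integral_const_mul, integral_one_sub_mul_log_one_add_div_cube_Ioi_zero]
  ring

theorem singular_kernel_log_integral (α : ℝ) (hα : 2 ≤ α) :
    ∫ y : EuclideanSpace ℝ (Fin 2),
      2 * α ^ 2 * (‖y‖ ^ (α - 2) / (1 + ‖y‖ ^ α) ^ 2) * ((1 - ‖y‖ ^ α) / (1 + ‖y‖ ^ α)) *
        Real.log ((1 + ‖y‖ ^ α) ^ 2) = -(4 * Real.pi * α) := by
  rw [integral_fun_norm_euclideanSpace_two
      (fun r => 2 * α ^ 2 * (r ^ (α - 2) / (1 + r ^ α) ^ 2) * ((1 - r ^ α) / (1 + r ^ α)) *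
        log ((1 + r ^ α) ^ 2)),
    integral_Ioi_mul_singular_kernel (by linarith)]
  ring
end

section
/- Let a, b be natural numbers with a ≤ b satisfying (a − b)² = a + b. Then there exists a natural number k such that a = k(k−1)/2 and b = k(k+1)/2. -/
open MeasureTheory Real Finset

theorem mass_quantization (a b : ℕ) (hab : a ≤ b) (h : ((a : ℤ) - b) ^ 2 = a + b) :
    ∃ k : ℕ, a = k * (k - 1) / 2 ∧ b = k * (k + 1) / 2 := by
  set k := b - a with hkdef
  have hb : (b : ℤ) = a + k := by simp [hkdef]; omega
  have hk2 : (k : ℤ) * k = a + b := by nlinarith [h]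
  have h1 : k * (k - 1) = 2 * a := by
    rcases Nat.eq_zero_or_pos k with hk0 | hk0
    · simp [hk0] at hk2 ⊢; omega
    · zify [Nat.one_le_iff_ne_zero.mpr (by omega : k ≠ 0)]
      nlinarith [hk2, hb]
  have h2 : k * (k + 1) = 2 * b := by
    zify; nlinarith [hk2, hb]
  exact ⟨k, by omega, by omega⟩
end
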